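/- Let K ≥ 1, let A be an invertible K×K real matrix that is uniformly exponentially stable, let β be a 1×K row vector, and let γ be a real number. Then the function t ↦ t²·(−β·exp((t−γ)•A)·A·𝟙) is integrable on [γ,∞) and ∫_{γ}^{∞} (−t²·β·exp((t−γ)•A)·A·𝟙) dt = β·(γ²·A² − 2γ·A + 2I)·A⁻²·𝟙. (This is the tail second-moment integral I_{2,∞}(β, A, γ) used in the analysis of multi-regime phase-type distributions.) -/

import Mathlib

open MeasureTheory Matrix

/-- The all-ones column vector. -/
noncomputable def onesCol (K : ℕ) : Matrix (Fin K) (Fin 1) ℝ := Matrix.of fun _ _ => 1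

/-- A square matrix `A` is uniformly exponentially stable if `‖exp(t•A)‖ ≤ C·exp(-α·t)`
for all `t ≥ 0` (here in the entrywise sup norm). -/
def UnifExpStable {K : ℕ} (A : Matrix (Fin K) (Fin K) ℝ) : Prop :=
  ∃ C > (0:ℝ), ∃ α > (0:ℝ), ∀ t ≥ (0:ℝ), ∀ i j,
    |NormedSpace.exp (t • A) i j| ≤ C * Real.exp (-α * t)

/-!
With `E t = exp ((t - γ) • A)`, the function `(t² - 2t A⁻¹ + 2A⁻²) E t` is a primitive of
`t² E t A`. Exponential stability makes both this primitive and the integrand `O(t² e^{-αt})`,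
so the primitive vanishes at infinity and the integrand is integrable on `[γ, ∞)`; the integral is
therefore minus the value of the primitive at `γ`, namely `-(γ²A² - 2γA + 2)A⁻²`. The theorem
follows by applying the linear functional `M ↦ β M 𝟙`.
-/

open Filter Set Topology Asymptotics NormedSpace

theorem tendsto_pow_mul_exp_neg_mul_atTop_nhds_zero (n : ℕ) {α : ℝ} (hα : 0 < α) :
    Tendsto (fun t : ℝ => t ^ n * Real.exp (-α * t)) atTop (𝓝 0) := by
  simpa using tendsto_rpow_mul_exp_neg_mul_atTop_nhds_zero n α hα

theorem integrableAtFilter_pow_mul_exp_neg_mul (n : ℕ) {α : ℝ} (hα : 0 < α) :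
    IntegrableAtFilter (fun t : ℝ => t ^ n * Real.exp (-α * t)) atTop := by
  have hn : (-1 : ℝ) < n := by linarith [n.cast_nonneg (α := ℝ)]
  refine ⟨Ioi 0, Ioi_mem_atTop 0, ?_⟩
  refine (integrableOn_rpow_mul_exp_neg_mul_rpow hn one_pos hα).congr_fun
    (fun t _ => ?_) measurableSet_Ioi
  simp

theorem Asymptotics.IsBigO.comp_sub_const_of_exp_neg_mul {E : Type*} [Norm E] {f : ℝ → E}
    {α : ℝ} (hf : f =O[atTop] fun t => Real.exp (-α * t)) (γ : ℝ) :
    (fun t => f (t - γ)) =O[atTop] fun t => Real.exp (-α * t) := by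
  refine (hf.comp_tendsto (tendsto_atTop_add_const_right _ (-γ) tendsto_id)).trans ?_
  refine IsBigO.of_bound (Real.exp (α * γ)) (Eventually.of_forall fun t => le_of_eq ?_)
  simp only [Function.comp_apply, id_eq, Real.norm_eq_abs, Real.abs_exp, ← Real.exp_add]
  ring_nf

theorem Asymptotics.IsBigO.pow_smul {E : Type*} [NormedAddCommGroup E] [NormedSpace ℝ E]
    {f : ℝ → E} {g : ℝ → ℝ} {l : Filter ℝ} (hf : f =O[l] g) (n : ℕ) :
    (fun t => t ^ n • f t) =O[l] fun t => t ^ n * g t := by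
  simpa only [smul_eq_mul] using (isBigO_refl (fun t : ℝ => t ^ n) l).smul hf

section NormedAlgebra

variable {𝔸 : Type*} [NormedRing 𝔸] [NormedAlgebra ℝ 𝔸]

theorem hasDerivAt_exp_sub_smul [CompleteSpace 𝔸] (A : 𝔸) (γ t : ℝ) :
    HasDerivAt (fun t : ℝ => exp ((t - γ) • A)) (exp ((t - γ) • A) * A) t := by
  simpa using (hasDerivAt_exp_smul_const A (t - γ)).comp_sub_const t γ

theorem continuous_exp_sub_smul [CompleteSpace 𝔸] (A : 𝔸) (γ : ℝ) :
    Continuous fun t : ℝ => exp ((t - γ) • A) :=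
  continuous_iff_continuousAt.2 fun t => (hasDerivAt_exp_sub_smul A γ t).continuousAt

noncomputable def sqMomentPrimitive (A B : 𝔸) (γ t : ℝ) : 𝔸 :=
  t ^ 2 • exp ((t - γ) • A) - (2 * t) • (B * exp ((t - γ) • A))
    + (2 : ℝ) • (B * B * exp ((t - γ) • A))

theorem hasDerivAt_sqMomentPrimitive [CompleteSpace 𝔸] {A B : 𝔸} (hBA : B * A = 1) (γ t : ℝ) :
    HasDerivAt (sqMomentPrimitive A B γ) (t ^ 2 • (exp ((t - γ) • A) * A)) t := by
  have hE := hasDerivAt_exp_sub_smul A γ t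
  set E := exp ((t - γ) • A)
  have hBEA : B * (E * A) = E := by
    rw [((Commute.refl A).smul_left (t - γ)).exp_left.eq, ← mul_assoc, hBA, one_mul]
  have := (((hasDerivAt_pow 2 t).smul hE).sub
    (((hasDerivAt_id t).const_mul 2).smul (hE.const_mul B))).add
    ((hE.const_mul (B * B)).const_smul (2 : ℝ))
  refine this.congr_deriv ?_
  rw [hBEA, mul_assoc B B, hBEA]
  simp only [id, Nat.cast_ofNat, mul_one]
  module

theorem tendsto_sqMomentPrimitive_atTop {A : 𝔸} (B : 𝔸) {α : ℝ} (hα : 0 < α) {γ : ℝ}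
    (hE : (fun t : ℝ => exp ((t - γ) • A)) =O[atTop] fun t => Real.exp (-α * t)) :
    Tendsto (sqMomentPrimitive A B γ) atTop (𝓝 0) := by
  have key : ∀ (C : 𝔸) (n : ℕ),
      Tendsto (fun t : ℝ => t ^ n • (C * exp ((t - γ) • A))) atTop (𝓝 0) := fun C n =>
    (((isBigO_const_mul_self C _ _).trans hE).pow_smul n).trans_tendsto
      (tendsto_pow_mul_exp_neg_mul_atTop_nhds_zero n hα)
  have := ((key 1 2).sub ((key B 1).const_smul (2 : ℝ))).add ((key (B * B) 0).const_smul (2 : ℝ))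
  simp only [one_mul, pow_one, pow_zero, one_smul, smul_zero, sub_zero, add_zero] at this
  refine this.congr fun t => ?_
  rw [sqMomentPrimitive, smul_smul]

theorem integral_Ioi_sq_smul_exp_sub_smul_mul [CompleteSpace 𝔸] {A : 𝔸} [Invertible A] {α : ℝ}
    (hα : 0 < α) (hdecay : (fun t : ℝ => exp (t • A)) =O[atTop] fun t => Real.exp (-α * t))
    (γ : ℝ) :
    IntegrableOn (fun t : ℝ => t ^ 2 • (exp ((t - γ) • A) * A)) (Ioi γ) ∧
      ∫ t in Ioi γ, t ^ 2 • (exp ((t - γ) • A) * A) =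
        -((γ ^ 2 • (A * A) - (2 * γ) • A + (2 : ℝ) • 1) * (⅟A * ⅟A)) := by
  have hE := hdecay.comp_sub_const_of_exp_neg_mul γ
  have hint : IntegrableOn (fun t : ℝ => t ^ 2 • (exp ((t - γ) • A) * A)) (Ioi γ) := by
    have hcont : Continuous fun t : ℝ => t ^ 2 • (exp ((t - γ) • A) * A) :=
      (continuous_pow 2).smul ((continuous_exp_sub_smul A γ).mul continuous_const)
    refine (hcont.continuousOn.locallyIntegrableOn measurableSet_Ici).integrableOn_of_isBigO_atTop
      ?_ (integrableAtFilter_pow_mul_exp_neg_mul 2 hα) |>.mono_set Ioi_subset_Ici_self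
    exact ((((ContinuousLinearMap.mul ℝ 𝔸).flip A).isBigO_comp _ _).trans hE).pow_smul 2
  refine ⟨hint, ?_⟩
  rw [integral_Ioi_of_hasDerivAt_of_tendsto'
    (fun t _ => hasDerivAt_sqMomentPrimitive (invOf_mul_self A) γ t) hint
    (tendsto_sqMomentPrimitive_atTop (⅟A) hα hE)]
  simp only [sqMomentPrimitive, sub_self, zero_smul, exp_zero, mul_one, zero_sub, sub_mul,
    add_mul, smul_mul_assoc, mul_assoc, mul_invOf_cancel_left, mul_invOf_self, one_mul]

end NormedAlgebra

section MatrixExp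

attribute [local instance] Matrix.linftyOpSeminormedAddCommGroup
  Matrix.linftyOpNormedAddCommGroup Matrix.linftyOpNormedSpace Matrix.linftyOpNormedRing
  Matrix.linftyOpNormedAlgebra

theorem Matrix.linfty_opNorm_le_card_mul {m n α : Type*} [Fintype m] [Fintype n]
    [SeminormedAddCommGroup α] {M : Matrix m n α} {c : ℝ} (hc : 0 ≤ c)
    (hM : ∀ i j, ‖M i j‖ ≤ c) : ‖M‖ ≤ Fintype.card n * c := by
  lift c to NNReal using hc
  rw [linfty_opNorm_def, ← NNReal.coe_natCast, ← NNReal.coe_mul, NNReal.coe_le_coe]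
  refine Finset.sup_le fun i _ => ?_
  have := Finset.sum_le_card_nsmul Finset.univ (fun j => ‖M i j‖₊) c fun j _ => hM i j
  rwa [Finset.card_univ, nsmul_eq_mul] at this

theorem UnifExpStable.exists_isBigO {K : ℕ} {A : Matrix (Fin K) (Fin K) ℝ}
    (hA : UnifExpStable A) :
    ∃ α > 0, (fun t : ℝ => exp (t • A)) =O[atTop] fun t => Real.exp (-α * t) := by
  obtain ⟨C, hC, α, hα, hbound⟩ := hA
  refine ⟨α, hα, IsBigO.of_bound (K * C) ?_⟩
  filter_upwards [eventually_ge_atTop 0] with t ht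
  rw [Real.norm_of_nonneg (Real.exp_pos _).le, mul_assoc]
  simpa using linfty_opNorm_le_card_mul (c := C * Real.exp (-α * t)) (by positivity)
    fun i j => hbound t ht i j

noncomputable def rowColPairing {m n : Type*} [Fintype m] [Fintype n]
    (β : Matrix (Fin 1) m ℝ) (v : Matrix n (Fin 1) ℝ) : Matrix m n ℝ →L[ℝ] ℝ :=
  LinearMap.toContinuousLinearMap
    { toFun := fun M => (β * M * v) 0 0
      map_add' := fun M N => by simp [Matrix.mul_add, Matrix.add_mul]
      map_smul' := fun c M => by simp [Matrix.mul_smul, Matrix.smul_mul] }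

@[simp] theorem rowColPairing_apply {m n : Type*} [Fintype m] [Fintype n]
    (β : Matrix (Fin 1) m ℝ) (v : Matrix n (Fin 1) ℝ) (M : Matrix m n ℝ) :
    rowColPairing β v M = (β * M * v) 0 0 := rfl

theorem UnifExpStable.integral_Ioi_sq_mul_exp_sub_smul_mul_apply {K : ℕ}
    {A : Matrix (Fin K) (Fin K) ℝ} [Invertible A] (hA : UnifExpStable A)
    (β : Matrix (Fin 1) (Fin K) ℝ) (v : Matrix (Fin K) (Fin 1) ℝ) (γ : ℝ) :
    IntegrableOn (fun t : ℝ => t ^ 2 * (β * exp ((t - γ) • A) * A * v) 0 0) (Ioi γ) ∧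
      ∫ t in Ioi γ, t ^ 2 * (β * exp ((t - γ) • A) * A * v) 0 0 =
        -(β * (γ ^ 2 • (A * A) - (2 * γ) • A + (2 : ℝ) • (1 : Matrix (Fin K) (Fin K) ℝ))
          * (A⁻¹ * A⁻¹) * v) 0 0 := by
  obtain ⟨α, hα, hdecay⟩ := hA.exists_isBigO
  obtain ⟨hint, hval⟩ := integral_Ioi_sq_smul_exp_sub_smul_mul hα hdecay γ
  set L := rowColPairing β v
  have hL : (fun t : ℝ => t ^ 2 * (β * exp ((t - γ) • A) * A * v) 0 0) =
      fun t => L (t ^ 2 • (exp ((t - γ) • A) * A)) := by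
    ext t
    simp [L, Matrix.mul_assoc]
  rw [hL]
  refine ⟨L.integrable_comp hint, (L.integral_comp_comm hint).trans ?_⟩
  rw [hval, invOf_eq_nonsing_inv]
  -- The matrix instances in `hval` and in the type of `L` agree only up to unfolding,
  -- so `simp` cannot rewrite `L (-_)` here; `exact` checks the defeq.
  exact (L.map_neg _).trans (by simp [L, Matrix.mul_assoc])

end MatrixExp

theorem mrph_I2_inf_general (K : ℕ)
    (A : Matrix (Fin K) (Fin K) ℝ) (hA : Invertible A) (hstab : UnifExpStable A)
    (β : Matrix (Fin 1) (Fin K) ℝ) (γ : ℝ) :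
    IntegrableOn
      (fun t : ℝ => t ^ 2 * (-(β * NormedSpace.exp ((t - γ) • A) * A * onesCol K)) 0 0)
      (Set.Ici γ) ∧
    ∫ t in Set.Ici γ, t ^ 2 * (-(β * NormedSpace.exp ((t - γ) • A) * A * onesCol K)) 0 0
      = (β * (γ ^ 2 • (A * A) - (2 * γ) • A + (2:ℝ) • (1 : Matrix (Fin K) (Fin K) ℝ))
          * (A⁻¹ * A⁻¹) * onesCol K) 0 0 := by
  obtain ⟨hint, hval⟩ := hstab.integral_Ioi_sq_mul_exp_sub_smul_mul_apply β (onesCol K) γ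
  simp only [Matrix.neg_apply, mul_neg]
  rw [integrableOn_Ici_iff_integrableOn_Ioi, integral_Ici_eq_integral_Ioi, integral_neg, hval,
    neg_neg]
  exact ⟨hint.neg, rfl⟩

/-- The tail second-moment integral `I_{2,∞}(β, A, γ)` of a multi-regime phase-type
distribution. -/
theorem mrph_I2_inf (K : ℕ) (hK : 1 ≤ K)
    (A : Matrix (Fin K) (Fin K) ℝ) (hA : Invertible A) (hstab : UnifExpStable A)
    (β : Matrix (Fin 1) (Fin K) ℝ) (γ : ℝ) :
    IntegrableOn
      (fun t : ℝ => t ^ 2 * (-(β * NormedSpace.exp ((t - γ) • A) * A * onesCol K)) 0 0)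
      (Set.Ici γ) ∧
    ∫ t in Set.Ici γ, t ^ 2 * (-(β * NormedSpace.exp ((t - γ) • A) * A * onesCol K)) 0 0
      = (β * (γ ^ 2 • (A * A) - (2 * γ) • A + (2:ℝ) • (1 : Matrix (Fin K) (Fin K) ℝ))
          * (A⁻¹ * A⁻¹) * onesCol K) 0 0 :=
  mrph_I2_inf_general K A hA hstab β γ
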